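/- Let s = (s₁,s₂,s₃) ∈ ℝ³ with s₁,s₂,s₃ > 0. Then the following are equivalent: (i) p_r(s) > 0 for all r = 1,2,3 and s₁,s₂,s₃ are not all equal; (ii) there exist a = (a₁,a₂,a₃) ∈ ℝ³ and b = (b₁,b₂,b₃) ∈ ℝ³ such that for all r = 1,2,3 (indices mod 3): the 2×2 symmetric matrix B_r(s,a,b) is positive definite, s_{r+1} + s_{r+2} - s_r + S(s)/(2s_r) + 3a_r > 0, and a_r < a_r⁰(s). (This is the matrix-level statement that a homogeneous metric g_s on the quaternionic flag manifold W¹² = Sp(3)/Sp(1)³ has strongly positive curvature if and only if it has sec > 0.) -/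

import Mathlib

open Matrix

/-- `S(s) = 2(s₁s₂+s₁s₃+s₂s₃) - (s₁²+s₂²+s₃²)`. -/
noncomputable def Spoly (s : Fin 3 → ℝ) : ℝ :=
  2 * (s 0 * s 1 + s 0 * s 2 + s 1 * s 2) - (s 0 ^ 2 + s 1 ^ 2 + s 2 ^ 2)

/-- `p_r(s) = (s_{r+1}-s_{r+2})² + 2 s_r (s_{r+1}+s_{r+2}) - 3 s_r²`, indices mod 3. -/
noncomputable def ppoly (s : Fin 3 → ℝ) (r : Fin 3) : ℝ :=
  (s (r + 1) - s (r + 2)) ^ 2 + 2 * s r * (s (r + 1) + s (r + 2)) - 3 * s r ^ 2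

/-- `a_r⁰(s) = ((s_{r+1}-s_{r+2})² - s_r²)/(2 s_r)`, indices mod 3. -/
noncomputable def a0 (s : Fin 3 → ℝ) (r : Fin 3) : ℝ :=
  ((s (r + 1) - s (r + 2)) ^ 2 - s r ^ 2) / (2 * s r)

/-- The `r`-th 2×2 block `B_r(s,a,b)` of the modified curvature operator of `(W¹², g_s)`. -/
noncomputable def Bmat (s a b : Fin 3 → ℝ) (r : Fin 3) : Matrix (Fin 2) (Fin 2) ℝ :=
  !![4 * s (r + 1) - b (r + 1),   -Spoly s / s r + 2 * a r;
     -Spoly s / s r + 2 * a r,    4 * s (r + 2) + b (r + 2)]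

/-!
Write `c_r = -S/s_r + 2 a_r` for the off-diagonal entry of `B_r`. The two scalar conditions on
`a_r` say exactly that `c_r` lies in the interval `(-(p_r + 9S)/(6 s_r), (p_r - 3S)/(2 s_r))`,
which is nonempty iff `p_r > 0`, and `B_r > 0` adds
`c_r² < (4 s_{r+1} - b_{r+1})(4 s_{r+2} + b_{r+2})`.
The right end point `u_r` satisfies `u_r² = 16 s_{r+1} s_{r+2} - 4 (s_{r+1} - s_{r+2})² S / s_r²`,
and `S = p_1 + p_2 + p_3 > 0`. So `b = 0` works when the `s_r` are pairwise distinct, and a small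
perturbation of `b` repairs the block of a coincident pair. If all `s_r = x`, then every
`c_r < u_r = -4x`, so each of the three products exceeds `16x²`, while their product is
`∏ (16x² - b_r²) ≤ (16x²)³`.
-/

open Filter Topology

theorem Matrix.posDef_fin_two_iff {A B C : ℝ} :
    (!![A, B; B, C] : Matrix (Fin 2) (Fin 2) ℝ).PosDef ↔ 0 < A ∧ 0 < C ∧ B ^ 2 < A * C := by
  have quad (u v : ℝ) :
      star ![u, v] ⬝ᵥ (!![A, B; B, C] *ᵥ ![u, v]) = A * u ^ 2 + 2 * B * u * v + C * v ^ 2 := by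
    simp only [dotProduct, mulVec, Pi.star_apply, star_trivial, of_apply, cons_val',
      cons_val_fin_one, Fin.sum_univ_two, Fin.isValue, cons_val_zero, cons_val_one]
    ring
  rw [Matrix.posDef_iff_dotProduct_mulVec]
  constructor
  · rintro ⟨-, h⟩
    have h₁ := quad 1 0 ▸ h (x := ![1, 0]) (by simp)
    have h₂ := quad 0 1 ▸ h (x := ![0, 1]) (by simp)
    have hA : 0 < A := by simpa using h₁
    have h₃ := quad B (-A) ▸ h (x := ![B, -A]) (by simp [hA.ne'])
    exact ⟨hA, by simpa using h₂, by nlinarith⟩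
  · rintro ⟨hA, hC, hB⟩
    refine ⟨by ext i j; fin_cases i <;> fin_cases j <;> rfl, fun x hx => ?_⟩
    have hx' : x = ![x 0, x 1] := by ext i; fin_cases i <;> rfl
    rw [hx', quad]
    have hx01 : x 0 ≠ 0 ∨ x 1 ≠ 0 := by
      by_contra! h
      exact hx (by ext i; fin_cases i <;> simp [h.1, h.2])
    -- completing the square: `A q(u, v) = (A u + B v)² + (A C - B²) v²`
    have hAq : 0 < A * (A * x 0 ^ 2 + 2 * B * x 0 * x 1 + C * x 1 ^ 2) := by
      rw [show A * (A * x 0 ^ 2 + 2 * B * x 0 * x 1 + C * x 1 ^ 2)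
          = (A * x 0 + B * x 1) ^ 2 + (A * C - B ^ 2) * x 1 ^ 2 by ring]
      rcases eq_or_ne (x 1) 0 with h1 | h1
      · have h0 := hx01.resolve_right (not_not.2 h1)
        simp only [h1, mul_zero, add_zero, ne_eq, OfNat.ofNat_ne_zero, not_false_eq_true, zero_pow]
        positivity
      · nlinarith [sq_nonneg (A * x 0 + B * x 1), mul_pos (sub_pos.2 hB) (sq_pos_of_ne_zero h1)]
    exact pos_of_mul_pos_right hAq hA.le

theorem exists_between_of_sq_lt {l u P : ℝ} (hlu : l < u) (hu : u ^ 2 < P) :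
    ∃ c, l < c ∧ c < u ∧ c ^ 2 < P := by
  obtain ⟨hPu, huP⟩ := Real.sq_lt.1 hu
  obtain ⟨c, hc, hcu⟩ := exists_between (max_lt hlu hPu)
  obtain ⟨hlc, hPc⟩ := max_lt_iff.1 hc
  exact ⟨c, hlc, hcu, Real.sq_lt.2 ⟨hPc, hcu.trans huP⟩⟩

/-- After reindexing, the product over `r` of `(m - b (r + i)) * (m + b (r + j))` is
`∏ r, (m ^ 2 - b r ^ 2) ≤ ∏ r, m ^ 2`. -/
theorem exists_mul_le_sq_of_pos {G : Type*} [AddGroup G] [Fintype G] [Nonempty G]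
    (m : ℝ) (b : G → ℝ) (i j : G) (hi : ∀ r, 0 < m - b (r + i)) (hj : ∀ r, 0 < m + b (r + j)) :
    ∃ r, (m - b (r + i)) * (m + b (r + j)) ≤ m ^ 2 := by
  have hsub (r : G) : 0 < m - b r := by simpa using hi (r - i)
  have hadd (r : G) : 0 < m + b r := by simpa using hj (r - j)
  by_contra! h
  have hm : 0 < m := by linarith [hsub (Classical.arbitrary G), hadd (Classical.arbitrary G)]
  have hlt : ∏ _r : G, m ^ 2 < ∏ r, (m - b (r + i)) * (m + b (r + j)) :=
    Finset.prod_lt_prod_of_nonempty (fun _ _ => by positivity) (fun r _ => h r)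
      Finset.univ_nonempty
  have hle : ∏ r, (m - b (r + i)) * (m + b (r + j)) ≤ ∏ _r : G, m ^ 2 := by
    rw [Finset.prod_mul_distrib,
      Fintype.prod_equiv (Equiv.addRight i) (fun r => m - b (r + i)) (m - b ·) (fun _ => rfl),
      Fintype.prod_equiv (Equiv.addRight j) (fun r => m + b (r + j)) (m + b ·) (fun _ => rfl),
      ← Finset.prod_mul_distrib]
    exact Finset.prod_le_prod (fun r _ => (mul_pos (hsub r) (hadd r)).le)
      (fun r _ => by nlinarith [sq_nonneg (b r)])
  exact hlt.not_ge hle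

namespace W12

variable (s a b : Fin 3 → ℝ) (r : Fin 3)

theorem Spoly_eq_rotate :
    Spoly s = 2 * (s r * s (r + 1) + s r * s (r + 2) + s (r + 1) * s (r + 2))
      - (s r ^ 2 + s (r + 1) ^ 2 + s (r + 2) ^ 2) := by
  fin_cases r <;>
    simp only [Spoly, Fin.isValue, Fin.zero_eta, Fin.mk_one, Fin.reduceFinMk, zero_add,
      Fin.reduceAdd] <;>
    ring

theorem Spoly_eq_sum_ppoly : Spoly s = ∑ r, ppoly s r := by
  simp only [Spoly, ppoly, Fin.sum_univ_three, Fin.isValue, zero_add, Fin.reduceAdd]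
  ring

noncomputable def offDiag : ℝ := -Spoly s / s r + 2 * a r

/-- The condition `0 < s_{r+1} + s_{r+2} - s_r + S/(2 s_r) + 3 a_r` reads `lowerBd < offDiag`. -/
noncomputable def lowerBd : ℝ := -(ppoly s r + 9 * Spoly s) / (6 * s r)

/-- The condition `a_r < a_r⁰` reads `offDiag < upperBd`. -/
noncomputable def upperBd : ℝ := (ppoly s r - 3 * Spoly s) / (2 * s r)

variable {s r}

theorem lowerBd_lt_offDiag_iff (hr : 0 < s r) :
    lowerBd s r < offDiag s a r ↔
      0 < s (r + 1) + s (r + 2) - s r + Spoly s / (2 * s r) + 3 * a r := by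
  have key : s (r + 1) + s (r + 2) - s r + Spoly s / (2 * s r) + 3 * a r
      = 3 / 2 * (offDiag s a r - lowerBd s r) := by
    unfold offDiag lowerBd ppoly
    rw [Spoly_eq_rotate s r]
    field_simp
    ring
  rw [key]
  constructor <;> intro h <;> linarith

theorem offDiag_lt_upperBd_iff (hr : 0 < s r) : offDiag s a r < upperBd s r ↔ a r < a0 s r := by
  have key : a0 s r - a r = (upperBd s r - offDiag s a r) / 2 := by
    unfold offDiag upperBd a0 ppoly
    rw [Spoly_eq_rotate s r]
    field_simp
    ring
  constructor <;> intro h <;> linarith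

theorem lowerBd_lt_upperBd_iff (hr : 0 < s r) : lowerBd s r < upperBd s r ↔ 0 < ppoly s r := by
  have key : upperBd s r - lowerBd s r = ppoly s r * (2 / (3 * s r)) := by
    unfold lowerBd upperBd
    field_simp
    ring
  rw [← sub_pos, key]
  exact mul_pos_iff_of_pos_right (by positivity)

theorem upperBd_sq (hr : 0 < s r) :
    upperBd s r ^ 2
      = 16 * s (r + 1) * s (r + 2) - 4 * (s (r + 1) - s (r + 2)) ^ 2 * Spoly s / s r ^ 2 := by
  unfold upperBd ppoly
  rw [Spoly_eq_rotate s r]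
  field_simp
  ring

theorem blockConds_iff (hr : 0 < s r) :
    ((Bmat s a b r).PosDef ∧ 0 < s (r + 1) + s (r + 2) - s r + Spoly s / (2 * s r) + 3 * a r ∧
        a r < a0 s r) ↔
      (0 < 4 * s (r + 1) - b (r + 1) ∧ 0 < 4 * s (r + 2) + b (r + 2) ∧
        offDiag s a r ^ 2 < (4 * s (r + 1) - b (r + 1)) * (4 * s (r + 2) + b (r + 2))) ∧
      lowerBd s r < offDiag s a r ∧ offDiag s a r < upperBd s r := by
  rw [lowerBd_lt_offDiag_iff a hr, offDiag_lt_upperBd_iff a hr]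
  exact and_congr_left' Matrix.posDef_fin_two_iff

theorem not_const_of_blockConds (hs : ∀ r, 0 < s r)
    (hB : ∀ r, 0 < 4 * s (r + 1) - b (r + 1) ∧ 0 < 4 * s (r + 2) + b (r + 2) ∧
      offDiag s a r ^ 2 < (4 * s (r + 1) - b (r + 1)) * (4 * s (r + 2) + b (r + 2)))
    (hu : ∀ r, offDiag s a r < upperBd s r) :
    ¬ (s 0 = s 1 ∧ s 1 = s 2) := by
  rintro ⟨h01, h12⟩
  have hconst (r : Fin 3) : s r = s 0 := by fin_cases r <;> simp [h01, h12]
  have hu_const (r : Fin 3) : upperBd s r = -4 * s 0 := by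
    have := hs 0
    unfold upperBd ppoly
    rw [Spoly_eq_rotate s r, hconst r, hconst (r + 1), hconst (r + 2)]
    field_simp
    ring
  obtain ⟨r, hr⟩ := exists_mul_le_sq_of_pos (4 * s 0) b 1 2
    (fun r => hconst (r + 1) ▸ (hB r).1) (fun r => hconst (r + 2) ▸ (hB r).2.1)
  have hc := (hB r).2.2
  have hcu := hu r
  rw [hconst (r + 1), hconst (r + 2)] at hc
  rw [hu_const r] at hcu
  nlinarith [hs 0]

/-- The direction in which `b = 0` is perturbed. Blocks with `s (r + 1) ≠ s (r + 2)` have slack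
at `b = 0`; for `s (r + 1) = s (r + 2)` it raises `det B_r` to first order, since then
`b (r + 1) = 0 < b (r + 2)`. -/
noncomputable def perturbation (s : Fin 3 → ℝ) (t : ℝ) (i : Fin 3) : ℝ := t * (s i - s (i + 1)) ^ 2

theorem eventually_perturbation_admissible (hs : ∀ r, 0 < s r) (hp : ∀ r, 0 < ppoly s r)
    (hne : ¬ (s 0 = s 1 ∧ s 1 = s 2)) (r : Fin 3) :
    ∀ᶠ t in 𝓝[>] 0, 0 < 4 * s (r + 1) - perturbation s t (r + 1) ∧
      0 < 4 * s (r + 2) + perturbation s t (r + 2) ∧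
      upperBd s r ^ 2 < (4 * s (r + 1) - perturbation s t (r + 1)) *
        (4 * s (r + 2) + perturbation s t (r + 2)) := by
  have hS : 0 < Spoly s := by
    rw [Spoly_eq_sum_ppoly]
    exact Finset.sum_pos (fun r _ => hp r) Finset.univ_nonempty
  have hy := hs (r + 1)
  by_cases hyz : s (r + 1) = s (r + 2)
  · have hxy : s (r + 1) - s r ≠ 0 := fun h => hne (by fin_cases r <;> simp_all [sub_eq_zero])
    have hr2 : r + 1 + 1 = r + 2 := by fin_cases r <;> rfl
    have hr3 : r + 2 + 1 = r := by fin_cases r <;> rfl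
    filter_upwards [self_mem_nhdsWithin] with t (ht : 0 < t)
    rw [upperBd_sq (hs r), perturbation, perturbation, hr2, hr3, ← hyz, sub_self]
    simp only [ne_eq, OfNat.ofNat_ne_zero, not_false_eq_true, zero_pow, mul_zero, zero_mul,
      sub_zero, zero_div]
    refine ⟨by positivity, by positivity, ?_⟩
    have : 0 < t * (s (r + 1) - s r) ^ 2 := by positivity
    nlinarith [mul_pos hy this]
  · have hu : upperBd s r ^ 2 < 4 * s (r + 1) * (4 * s (r + 2)) := by
      have : 0 < 4 * (s (r + 1) - s (r + 2)) ^ 2 * Spoly s / s r ^ 2 := by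
        have := hs r
        have := sub_ne_zero.2 hyz
        positivity
      rw [upperBd_sq (hs r)]
      linarith
    refine Eventually.filter_mono nhdsWithin_le_nhds ?_
    simp only [perturbation]
    refine (continuousAt_const.eventually_lt (by fun_prop) ?_).and
      ((continuousAt_const.eventually_lt (by fun_prop) ?_).and
        (continuousAt_const.eventually_lt (by fun_prop) ?_)) <;>
      simp only [zero_mul, sub_zero, add_zero]
    · linarith
    · linarith [hs (r + 2)]
    · exact hu

end W12

open W12

/-- Matrix-level statement: `g_s` on `W¹²` has strongly positive curvature iff it has
`sec > 0`, i.e. `p_r(s) > 0` for all `r` and the `s_r` are not all equal. -/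
theorem stronglyPos_W12_iff (s : Fin 3 → ℝ) (hs : ∀ r, 0 < s r) :
    ((∀ r, 0 < ppoly s r) ∧ ¬ (s 0 = s 1 ∧ s 1 = s 2)) ↔
      ∃ a b : Fin 3 → ℝ, ∀ r : Fin 3,
        (Bmat s a b r).PosDef ∧
        0 < s (r + 1) + s (r + 2) - s r + Spoly s / (2 * s r) + 3 * a r ∧
        a r < a0 s r := by
  constructor
  · rintro ⟨hp, hne⟩
    obtain ⟨t, ht⟩ := (eventually_all.2 (eventually_perturbation_admissible hs hp hne)).exists
    choose c hc using fun r =>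
      exists_between_of_sq_lt ((lowerBd_lt_upperBd_iff (hs r)).2 (hp r)) (ht r).2.2
    let a r := (c r + Spoly s / s r) / 2
    have hac (r : Fin 3) : offDiag s a r = c r := by simp only [offDiag, a]; ring
    refine ⟨a, perturbation s t, fun r => (blockConds_iff a _ (hs r)).2 ?_⟩
    rw [hac]
    exact ⟨⟨(ht r).1, (ht r).2.1, (hc r).2.2⟩, (hc r).1, (hc r).2.1⟩
  · rintro ⟨a, b, h⟩
    have h' r := (blockConds_iff a b (hs r)).1 (h r)
    exact ⟨fun r => (lowerBd_lt_upperBd_iff (hs r)).1 ((h' r).2.1.trans (h' r).2.2),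
      not_const_of_blockConds a b hs (fun r => (h' r).1) (fun r => (h' r).2.2)⟩
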